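/- With the additive disruption function φ = φ^sum and risk increasing with distance (r_{i,j} = r(|c(i) − c(j)| + 1)/n for all i,j and some r ∈ [0,1]), the maximum (resp. minimum) expected social welfare among 𝒬-clustered networks is achieved at the islands (resp. fully connected) economy: for every partition 𝒬 of {1,…,n}, Ŵ(A^{I}) ≥ Ŵ(A^𝒬) ≥ Ŵ(A^{F}), where A^I corresponds to the partition into singletons and A^F to the single-cluster partition. -/

import Mathlib

/-!
Replicate economy with n countries and L categories; firms = `Fin L × Fin n`
(category, country); partitions of the countries are `Setoid (Fin n)`;
`AQ B Q` is the 𝒬-clustered network A^𝒬 (fully connected A^F = `AQ B ⊤`,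
islands A^I = `AQ B ⊥`). Each link (i,j) is disrupted independently with
probability r i j; under Hicks-neutral productivity the expected social
welfare of a network A is
Ŵ(A) = Σ_{K ⊆ M×M} [Π_{(i,j)∉K}(1 − r_{i,j}) Π_{(i,j)∈K} r_{i,j}]
        (a_0^n ⋅ (I − A)⁻¹ u_K),
with (u_K)_i = φ_i(K,A) log(1 − ρ) + b_{ℓ(i),0} log b_{ℓ(i),0}, where
`phiSum` is the additive disruption function φ^sum.

STATEMENT 18: with φ = φ^sum and risk increasing with distance
(r_{i,j} = r(|c(i) − c(j)| + 1)/n, r ∈ [0,1]), for every partition 𝒬: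
Ŵ(A^I) ≥ Ŵ(A^𝒬) ≥ Ŵ(A^F).
-/

noncomputable section

open Matrix Finset

attribute [local instance] Classical.propDecidable

/-- Firms: (category, country). -/
abbrev Firm (L n : ℕ) := Fin L × Fin n

/-- Cardinality of the cluster (equivalence class) of country `c`. -/
def clusterCard {n : ℕ} (Q : Setoid (Fin n)) (c : Fin n) : ℕ :=
  (univ.filter fun c' => Q.r c c').card

/-- The 𝒬-clustered production network A^𝒬. -/
def AQ {L n : ℕ} (B : Fin L → Fin L → ℝ) (Q : Setoid (Fin n)) :
    Matrix (Firm L n) (Firm L n) ℝ :=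
  Matrix.of fun i j =>
    if i.1 = j.1 then (if i = j then B i.1 i.1 else 0)
    else if Q.r i.2 j.2 then B i.1 j.1 / (clusterCard Q i.2 : ℝ) else 0

/-- Household consumption shares on firms: a0 ℓ / n. -/
def a0n {L : ℕ} (n : ℕ) (a0 : Fin L → ℝ) : Firm L n → ℝ :=
  fun i => a0 i.1 / n

/-- Min-disruption function φ^min: for each category, the smallest disrupted
positive input share (0 if no such link). -/
def phiMin {L n : ℕ} (A : Matrix (Firm L n) (Firm L n) ℝ)
    (K : Finset (Firm L n × Firm L n)) (i : Firm L n) : ℝ :=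
  ∑ ℓ : Fin L,
    (if h : (univ.filter fun j : Firm L n =>
        j.1 = ℓ ∧ (i, j) ∈ K ∧ 0 < A i j).Nonempty
     then (univ.filter fun j : Firm L n =>
        j.1 = ℓ ∧ (i, j) ∈ K ∧ 0 < A i j).inf' h (fun j => A i j)
     else 0)

/-- Additive disruption function φ^sum. -/
def phiSum {L n : ℕ} (A : Matrix (Firm L n) (Firm L n) ℝ)
    (K : Finset (Firm L n × Firm L n)) (i : Firm L n) : ℝ :=
  ∑ j ∈ univ.filter (fun j : Firm L n => (i, j) ∈ K ∧ 0 < A i j), A i j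

/-- Disrupted entropy-corrected productivity vector u_K. -/
def uK {L n : ℕ} (b0 : Fin L → ℝ) (ρ : ℝ)
    (φ : Matrix (Firm L n) (Firm L n) ℝ → Finset (Firm L n × Firm L n) → Firm L n → ℝ)
    (A : Matrix (Firm L n) (Firm L n) ℝ) (K : Finset (Firm L n × Firm L n)) :
    Firm L n → ℝ :=
  fun i => φ A K i * Real.log (1 - ρ) + b0 i.1 * Real.log (b0 i.1)

/-- Expected social welfare Ŵ(A). -/
def What {L n : ℕ} (a0 b0 : Fin L → ℝ) (ρ : ℝ) (r : Firm L n → Firm L n → ℝ)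
    (φ : Matrix (Firm L n) (Firm L n) ℝ → Finset (Firm L n × Firm L n) → Firm L n → ℝ)
    (A : Matrix (Firm L n) (Firm L n) ℝ) : ℝ :=
  ∑ K : Finset (Firm L n × Firm L n),
    ((∏ p ∈ Kᶜ, (1 - r p.1 p.2)) * ∏ p ∈ K, r p.1 p.2) *
      (a0n n a0 ⬝ᵥ ((1 - A)⁻¹.mulVec (uK b0 ρ φ A K)))

/-!
With `φ = phiSum` the welfare of a fixed disruption set `K` is affine in the indicators of the
links in `K`, so the expectation over independent link failures replaces each indicator by its
probability `r i j`. The Leontief row vector `a0n ᵥ* (1 - A^𝒬)⁻¹` does not depend on `𝒬`: every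
column of `A^𝒬` carries the same category totals, so it equals `W ℓ / n` with
`W = a0 ᵥ* (1 - B)⁻¹ ≥ 0`. Hence `Ŵ(A^𝒬) = C + κ D(𝒬)` with `κ ≤ 0`, where `D(𝒬)` sums over
countries the mean distance to the members of their cluster. Clearly `D(⊥) = 0 ≤ D(𝒬)`. Writing
`|a - b| = ∑ t, (1[t < a] - 1[t < b])²` turns `D(𝒬) ≤ D(⊤)` into "within-cluster variance ≤ total
variance", which is Cauchy–Schwarz for the cluster means.
-/

section Bernoulli

variable {α : Type*} [Fintype α] [DecidableEq α]

def bernoulliWeight (r : α → ℝ) (K : Finset α) : ℝ :=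
  (∏ p ∈ Kᶜ, (1 - r p)) * ∏ p ∈ K, r p

lemma sum_bernoulliWeight (r : α → ℝ) : ∑ K, bernoulliWeight r K = 1 := by
  simp_rw [bernoulliWeight, mul_comm (∏ p ∈ _ᶜ, _), ← Fintype.prod_add, add_sub_cancel,
    prod_const_one]

lemma sum_bernoulliWeight_of_mem (r : α → ℝ) (p : α) :
    ∑ K, (if p ∈ K then bernoulliWeight r K else 0) = r p := by
  -- replacing the factor `1 - r p` by `0` kills exactly the sets `K` not containing `p`
  have hK : ∀ K : Finset α, (if p ∈ K then bernoulliWeight r K else 0)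
      = (∏ q ∈ K, r q) * ∏ q ∈ Kᶜ, (if q = p then 0 else 1 - r q) := by
    intro K
    by_cases hp : p ∈ K
    · rw [if_pos hp, bernoulliWeight, mul_comm]
      congr 1
      exact prod_congr rfl fun q hq => (if_neg (by rintro rfl; exact mem_compl.1 hq hp)).symm
    · rw [if_neg hp, Finset.prod_eq_zero (mem_compl.2 hp) (by rw [if_pos rfl]), mul_zero]
  simp_rw [hK, ← Fintype.prod_add]
  rw [prod_eq_single p (fun q _ hq => by rw [if_neg hq, add_sub_cancel]) (by simp)]
  simp

lemma sum_bernoulliWeight_mul_add_sum (r h : α → ℝ) (c : ℝ) :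
    ∑ K, bernoulliWeight r K * (c + ∑ p ∈ K, h p) = c + ∑ p, r p * h p := by
  have hK : ∀ K : Finset α, bernoulliWeight r K * ∑ p ∈ K, h p
      = ∑ p, (if p ∈ K then bernoulliWeight r K else 0) * h p := by
    intro K
    simp_rw [ite_mul, zero_mul, sum_ite_mem, univ_inter, mul_sum]
  simp_rw [mul_add, sum_add_distrib, ← sum_mul, sum_bernoulliWeight, one_mul, hK]
  rw [sum_comm]
  simp_rw [← sum_mul, sum_bernoulliWeight_of_mem]

end Bernoulli

namespace Matrix

variable {ι : Type*} [Fintype ι] {A : Matrix ι ι ℝ}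

/-- The negative part `m = min v 0` satisfies `m ≤ m ᵥ* A` entrywise, which the strict row-sum
bound only allows for `m = 0`. -/
lemma nonneg_of_eq_add_vecMul (hA : ∀ i j, 0 ≤ A i j) (hrow : ∀ i, ∑ j, A i j < 1)
    {a v : ι → ℝ} (ha : ∀ i, 0 ≤ a i) (hv : ∀ j, v j = a j + (v ᵥ* A) j) (i : ι) :
    0 ≤ v i := by
  set m : ι → ℝ := fun i => min (v i) 0
  have hm : ∀ j, ∑ i, m i * A i j ≤ m j := fun j => by
    have hle : ∑ i, m i * A i j ≤ ∑ i, v i * A i j :=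
      sum_le_sum fun i _ => mul_le_mul_of_nonneg_right (min_le_left _ _) (hA i j)
    have hnonpos : ∑ i, m i * A i j ≤ 0 :=
      sum_nonpos fun i _ => mul_nonpos_of_nonpos_of_nonneg (min_le_right _ _) (hA i j)
    refine le_min ?_ hnonpos
    rw [hv j]
    exact hle.trans (le_add_of_nonneg_left (ha j))
  have hsum : 0 ≤ ∑ i, m i * (1 - ∑ j, A i j) := by
    simp_rw [mul_sub, mul_one, sum_sub_distrib, mul_sum]
    rw [sum_comm]
    exact sub_nonneg.2 (sum_le_sum fun j _ => hm j)
  have hterm : ∀ i ∈ univ, m i * (1 - ∑ j, A i j) ≤ 0 := fun i _ =>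
    mul_nonpos_of_nonpos_of_nonneg (min_le_right _ _) (sub_nonneg.2 (hrow i).le)
  have hzero := (sum_eq_zero_iff_of_nonpos hterm).1
    (le_antisymm (sum_nonpos hterm) hsum) i (mem_univ i)
  rcases mul_eq_zero.1 hzero with h | h
  · exact min_eq_right_iff.1 h
  · linarith [hrow i]

variable [DecidableEq ι]

lemma det_one_sub_ne_zero (hA : ∀ i j, 0 ≤ A i j) (hrow : ∀ i, ∑ j, A i j < 1) :
    (1 - A).det ≠ 0 := by
  refine det_ne_zero_of_sum_row_lt_diag fun k => ?_
  have hk := hrow k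
  rw [← add_sum_erase _ _ (mem_univ k)] at hk
  have hoff_nonneg : 0 ≤ ∑ j ∈ univ.erase k, A k j := sum_nonneg fun j _ => hA k j
  have hoff : ∀ j ∈ univ.erase k, ‖(1 - A) k j‖ = A k j := fun j hj => by
    rw [sub_apply, one_apply_ne (ne_of_mem_erase hj).symm, zero_sub, norm_neg,
      Real.norm_of_nonneg (hA k j)]
  rw [sum_congr rfl hoff, sub_apply, one_apply_eq, Real.norm_of_nonneg (by linarith)]
  linarith

lemma vecMul_inv_one_sub_nonneg (hA : ∀ i j, 0 ≤ A i j) (hrow : ∀ i, ∑ j, A i j < 1)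
    {a : ι → ℝ} (ha : ∀ i, 0 ≤ a i) (i : ι) : 0 ≤ (a ᵥ* (1 - A)⁻¹) i := by
  have hunit : IsUnit (1 - A).det := (det_one_sub_ne_zero hA hrow).isUnit
  refine nonneg_of_eq_add_vecMul hA hrow ha (fun j => ?_) i
  have h : a ᵥ* (1 - A)⁻¹ ᵥ* (1 - A) = a := by
    rw [vecMul_vecMul, nonsing_inv_mul _ hunit, vecMul_one]
  rw [vecMul_sub, vecMul_one] at h
  have hj := congrFun h j
  simp only [Pi.sub_apply] at hj
  linarith

end Matrix

section Clusters

variable {n : ℕ} (Q : Setoid (Fin n))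

def clusterAvg (f : Fin n → ℝ) (c : Fin n) : ℝ :=
  (∑ c' ∈ univ.filter (fun c' => Q.r c c'), f c') / clusterCard Q c

lemma clusterCard_pos (c : Fin n) : 0 < clusterCard Q c :=
  card_pos.2 ⟨c, mem_filter.2 ⟨mem_univ c, Q.refl' c⟩⟩

variable {Q} in
lemma filter_rel_eq_of_rel {a b : Fin n} (h : Q.r a b) :
    univ.filter (fun c' => Q.r a c') = univ.filter (fun c' => Q.r b c') := by
  ext c
  simp only [mem_filter, mem_univ, true_and]
  exact ⟨Q.trans' (Q.symm' h), Q.trans' h⟩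

variable {Q} in
lemma clusterAvg_eq_of_rel (f : Fin n → ℝ) {a b : Fin n} (h : Q.r a b) :
    clusterAvg Q f a = clusterAvg Q f b := by
  rw [clusterAvg, clusterAvg, clusterCard, clusterCard, filter_rel_eq_of_rel h]

lemma sum_ite_rel_inv_clusterCard (c₀ : Fin n) :
    ∑ c, (if Q.r c c₀ then (clusterCard Q c : ℝ)⁻¹ else 0) = 1 := by
  have hcard : ∀ c ∈ univ.filter (fun c => Q.r c c₀), (clusterCard Q c : ℝ)⁻¹
      = (clusterCard Q c₀ : ℝ)⁻¹ := fun c hc => by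
    rw [clusterCard, clusterCard, filter_rel_eq_of_rel (mem_filter.1 hc).2]
  have hsymm : univ.filter (fun c => Q.r c c₀) = univ.filter (fun c => Q.r c₀ c) := by
    ext c
    simp only [mem_filter, mem_univ, true_and]
    exact ⟨Q.symm', Q.symm'⟩
  rw [← sum_filter, sum_congr rfl hcard, sum_const, hsymm, nsmul_eq_mul]
  exact mul_inv_cancel₀ (Nat.cast_ne_zero.2 (clusterCard_pos Q c₀).ne')

lemma sum_clusterAvg (f : Fin n → ℝ) : ∑ c, clusterAvg Q f c = ∑ c, f c := by
  simp_rw [clusterAvg, div_eq_mul_inv, sum_mul, sum_filter]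
  rw [sum_comm]
  refine sum_congr rfl fun c' _ => ?_
  have h := congrArg (f c' * ·) (sum_ite_rel_inv_clusterCard Q c')
  simpa only [mul_sum, mul_ite, mul_zero, mul_one] using h

lemma clusterAvg_const (x : ℝ) (c : Fin n) : clusterAvg Q (fun _ => x) c = x := by
  rw [clusterAvg, sum_const, nsmul_eq_mul, ← clusterCard,
    mul_div_cancel_left₀ _ (Nat.cast_ne_zero.2 (clusterCard_pos Q c).ne')]

variable {Q} in
lemma clusterAvg_mul_of_rel {f g : Fin n → ℝ} {c : Fin n} (hg : ∀ c', Q.r c c' → g c' = g c) :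
    clusterAvg Q (fun c' => f c' * g c') c = clusterAvg Q f c * g c := by
  rw [clusterAvg, clusterAvg, div_mul_eq_mul_div, sum_mul]
  congr 1
  exact sum_congr rfl fun c' hc' => by rw [hg c' (mem_filter.1 hc').2]

lemma clusterAvg_sum {τ : Type*} (s : Finset τ) (f : τ → Fin n → ℝ) (c : Fin n) :
    clusterAvg Q (fun c' => ∑ t ∈ s, f t c') c = ∑ t ∈ s, clusterAvg Q (f t) c := by
  simp_rw [clusterAvg, sum_div]
  rw [sum_comm]

lemma clusterAvg_bot (f : Fin n → ℝ) (c : Fin n) : clusterAvg ⊥ f c = f c := by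
  have h : univ.filter (fun c' => (⊥ : Setoid (Fin n)).r c c') = {c} := by
    ext c'
    simp only [mem_filter, mem_univ, true_and, mem_singleton]
    exact eq_comm
  rw [clusterAvg, clusterCard, h, sum_singleton, card_singleton, Nat.cast_one, div_one]

lemma clusterAvg_top (f : Fin n → ℝ) (c : Fin n) : clusterAvg ⊤ f c = (∑ c', f c') / n := by
  have h : univ.filter (fun c' => (⊤ : Setoid (Fin n)).r c c') = univ :=
    filter_true_of_mem fun _ _ => trivial
  rw [clusterAvg, clusterCard, h, card_univ, Fintype.card_fin]

lemma sum_clusterAvg_sq_sub (y : Fin n → ℝ) :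
    ∑ c, clusterAvg Q (fun c' => (y c - y c') ^ 2) c
      = 2 * (∑ c, y c ^ 2 - ∑ c, clusterAvg Q y c ^ 2) := by
  have hpt : ∀ c, clusterAvg Q (fun c' => (y c - y c') ^ 2) c
      = y c ^ 2 - 2 * (y c * clusterAvg Q y c) + clusterAvg Q (fun c' => y c' ^ 2) c := by
    intro c
    have hm : (clusterCard Q c : ℝ) ≠ 0 := Nat.cast_ne_zero.2 (clusterCard_pos Q c).ne'
    simp only [clusterAvg, sub_sq, sum_add_distrib, sum_sub_distrib, sum_const, ← mul_sum,
      nsmul_eq_mul]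
    rw [← clusterCard]
    field_simp
  have hcross : ∑ c, y c * clusterAvg Q y c = ∑ c, clusterAvg Q y c ^ 2 := by
    rw [← sum_clusterAvg Q (fun c => y c * clusterAvg Q y c)]
    refine sum_congr rfl fun c _ => ?_
    rw [clusterAvg_mul_of_rel fun c' h => (clusterAvg_eq_of_rel y h).symm, sq]
  simp_rw [hpt, sum_add_distrib, sum_sub_distrib, ← mul_sum, hcross, sum_clusterAvg]
  ring

lemma sum_sq_clusterAvg_top_le (y : Fin n → ℝ) :
    ∑ c, clusterAvg ⊤ y c ^ 2 ≤ ∑ c, clusterAvg Q y c ^ 2 := by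
  have h := sq_sum_le_card_mul_sum_sq (s := univ) (f := clusterAvg Q y)
  rw [sum_clusterAvg, card_univ, Fintype.card_fin] at h
  simp_rw [clusterAvg_top, sum_const, card_univ, Fintype.card_fin, nsmul_eq_mul]
  rcases n.eq_zero_or_pos with rfl | hn
  · simp
  · rw [div_pow, mul_div_assoc', div_le_iff₀ (by positivity)]
    nlinarith

lemma sum_clusterAvg_sq_sub_le_top (y : Fin n → ℝ) :
    ∑ c, clusterAvg Q (fun c' => (y c - y c') ^ 2) c
      ≤ ∑ c, clusterAvg ⊤ (fun c' => (y c - y c') ^ 2) c := by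
  rw [sum_clusterAvg_sq_sub, sum_clusterAvg_sq_sub]
  linarith [sum_sq_clusterAvg_top_le Q y]

lemma abs_sub_eq_sum_sq_indicator (a b : Fin n) :
    |(a.val : ℝ) - b.val|
      = ∑ t : Fin n, ((if t < a then 1 else 0) - (if t < b then 1 else 0)) ^ 2 := by
  wlog hab : a ≤ b generalizing a b
  · rw [abs_sub_comm, this b a (le_of_not_ge hab)]
    exact sum_congr rfl fun t _ => by ring
  have hab' : a.val ≤ b.val := hab
  have hterm : ∀ t : Fin n, ((if t < a then (1 : ℝ) else 0) - (if t < b then 1 else 0)) ^ 2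
      = if t ∈ Ico a b then 1 else 0 := fun t => by
    simp only [mem_Ico, Fin.lt_def, Fin.le_def]
    split_ifs <;> first | (exfalso; omega) | norm_num
  rw [sum_congr rfl fun t _ => hterm t, sum_boole, filter_mem_eq_inter, univ_inter,
    Fin.card_Ico, Nat.cast_sub hab, abs_sub_comm,
    abs_of_nonneg (sub_nonneg.2 (by exact_mod_cast hab'))]

def meanClusterDist : ℝ := ∑ c, clusterAvg Q (fun c' => |(c.val : ℝ) - c'.val|) c

lemma meanClusterDist_le_top : meanClusterDist Q ≤ meanClusterDist (⊤ : Setoid (Fin n)) := by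
  simp_rw [meanClusterDist, abs_sub_eq_sum_sq_indicator, clusterAvg_sum]
  rw [sum_comm, sum_comm (f := fun c t => clusterAvg ⊤ _ c)]
  exact sum_le_sum fun t _ => sum_clusterAvg_sq_sub_le_top Q (fun c => if t < c then 1 else 0)

lemma meanClusterDist_bot : meanClusterDist (⊥ : Setoid (Fin n)) = 0 := by
  simp [meanClusterDist, clusterAvg_bot]

lemma meanClusterDist_nonneg : 0 ≤ meanClusterDist Q :=
  sum_nonneg fun _ _ => div_nonneg (sum_nonneg fun _ _ => abs_nonneg _) (Nat.cast_nonneg _)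

end Clusters

section ClusteredNetwork

variable {L n : ℕ} (B : Fin L → Fin L → ℝ) (Q : Setoid (Fin n))

lemma AQ_apply_same_category (ℓ : Fin L) (c c' : Fin n) :
    AQ B Q (ℓ, c) (ℓ, c') = if c = c' then B ℓ ℓ else 0 := by
  simp [AQ]

lemma AQ_apply_of_ne {ℓ ℓ' : Fin L} (h : ℓ ≠ ℓ') (c c' : Fin n) :
    AQ B Q (ℓ, c) (ℓ', c') = if Q.r c c' then B ℓ ℓ' / clusterCard Q c else 0 := by
  simp [AQ, h]

variable {B} in
lemma AQ_nonneg (hB : ∀ ℓ ℓ', 0 ≤ B ℓ ℓ') (i j : Firm L n) : 0 ≤ AQ B Q i j := by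
  simp only [AQ, of_apply]
  split_ifs <;>
    first | exact hB _ _ | exact le_rfl | exact div_nonneg (hB _ _) (Nat.cast_nonneg _)

lemma sum_mul_AQ_apply (f : Fin n → ℝ) (i : Firm L n) :
    ∑ j, f j.2 * AQ B Q i j
      = B i.1 i.1 * f i.2 + (∑ ℓ' ∈ univ.erase i.1, B i.1 ℓ') * clusterAvg Q f i.2 := by
  obtain ⟨ℓ, c⟩ := i
  rw [Fintype.sum_prod_type, ← add_sum_erase _ _ (mem_univ ℓ), sum_mul]
  congr 1
  · simp [AQ_apply_same_category, mul_comm]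
  · refine sum_congr rfl fun ℓ' hℓ' => ?_
    simp_rw [AQ_apply_of_ne B Q (ne_of_mem_erase hℓ').symm, mul_ite, mul_zero, ← sum_filter,
      ← sum_mul, clusterAvg]
    ring

lemma sum_AQ_apply (i : Firm L n) : ∑ j, AQ B Q i j = ∑ ℓ', B i.1 ℓ' := by
  have h := sum_mul_AQ_apply B Q (fun _ => 1) i
  simp only [one_mul, mul_one, clusterAvg_const] at h
  rw [h, add_sum_erase _ _ (mem_univ _)]

lemma sum_mul_AQ_apply_left (g : Fin L → ℝ) (j : Firm L n) :
    ∑ i, g i.1 * AQ B Q i j = ∑ ℓ, g ℓ * B ℓ j.1 := by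
  obtain ⟨ℓ', c'⟩ := j
  rw [Fintype.sum_prod_type]
  refine sum_congr rfl fun ℓ _ => ?_
  by_cases h : ℓ = ℓ'
  · subst h
    simp [AQ_apply_same_category]
  · have hsum := congrArg (g ℓ * B ℓ ℓ' * ·) (sum_ite_rel_inv_clusterCard Q c')
    simp_rw [AQ_apply_of_ne B Q h, mul_ite, mul_zero, div_eq_mul_inv]
    simpa [mul_sum, mul_assoc] using hsum

lemma vecMul_inv_one_sub_AQ (hdet : (1 - AQ B Q).det ≠ 0) {a0 W : Fin L → ℝ}
    (hW : W ᵥ* (1 - of B) = a0) :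
    a0n n a0 ᵥ* (1 - AQ B Q)⁻¹ = fun i => W i.1 / n := by
  have h : (fun i : Firm L n => W i.1 / n) ᵥ* (1 - AQ B Q) = a0n n a0 := by
    funext j
    have hj := congrFun hW j.1
    simp only [vecMul_sub, vecMul_one, Pi.sub_apply] at hj ⊢
    simp only [vecMul, dotProduct, of_apply, div_mul_eq_mul_div] at hj ⊢
    rw [← sum_div, sum_mul_AQ_apply_left, ← sub_div, hj, a0n]
  rw [← h, vecMul_vecMul, mul_nonsing_inv _ hdet.isUnit, vecMul_one]

lemma sum_mul_AQ_apply_of_dist (r0 : ℝ) {r : Firm L n → Firm L n → ℝ}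
    (hr : ∀ i j : Firm L n, r i j = r0 * ((|(i.2.val : ℝ) - (j.2.val : ℝ)| + 1) / n))
    (i : Firm L n) :
    ∑ j, r i j * AQ B Q i j
      = r0 / n * (∑ ℓ', B i.1 ℓ' + (∑ ℓ' ∈ univ.erase i.1, B i.1 ℓ')
          * clusterAvg Q (fun c' => |(i.2.val : ℝ) - c'.val|) i.2) := by
  have h := sum_mul_AQ_apply B Q (fun c' => |(i.2.val : ℝ) - c'.val|) i
  simp only [sub_self, abs_zero, mul_zero, zero_add] at h
  rw [← h, ← sum_AQ_apply B Q i, ← sum_add_distrib, mul_sum]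
  exact sum_congr rfl fun j _ => by rw [hr]; ring

end ClusteredNetwork

section Welfare

variable {L n : ℕ}

lemma phiSum_eq_sum_ite {A : Matrix (Firm L n) (Firm L n) ℝ} (hA : ∀ i j, 0 ≤ A i j)
    (K : Finset (Firm L n × Firm L n)) (i : Firm L n) :
    phiSum A K i = ∑ j, if (i, j) ∈ K then A i j else 0 := by
  rw [phiSum, sum_filter]
  refine sum_congr rfl fun j _ => ?_
  by_cases hK : (i, j) ∈ K
  · rcases (hA i j).lt_or_eq with h | h <;> simp [hK, h]
  · simp [hK]

lemma What_phiSum_eq (a0 b0 : Fin L → ℝ) (ρ : ℝ) (r : Firm L n → Firm L n → ℝ)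
    {A : Matrix (Firm L n) (Firm L n) ℝ} (hA : ∀ i j, 0 ≤ A i j) :
    What a0 b0 ρ r phiSum A
      = ∑ i, (a0n n a0 ᵥ* (1 - A)⁻¹) i * (b0 i.1 * Real.log (b0 i.1))
        + Real.log (1 - ρ) * ∑ i, (a0n n a0 ᵥ* (1 - A)⁻¹) i * ∑ j, r i j * A i j := by
  set v := a0n n a0 ᵥ* (1 - A)⁻¹
  have hK : ∀ K, a0n n a0 ⬝ᵥ ((1 - A)⁻¹ *ᵥ uK b0 ρ phiSum A K)
      = ∑ i, v i * (b0 i.1 * Real.log (b0 i.1))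
        + ∑ p ∈ K, Real.log (1 - ρ) * (v p.1 * A p.1 p.2) := by
    intro K
    rw [dotProduct_mulVec]
    simp only [dotProduct, uK, mul_add, sum_add_distrib, phiSum_eq_sum_ite hA]
    rw [add_comm, ← Fintype.sum_ite_mem K, Fintype.sum_prod_type
      (fun p => if p ∈ K then Real.log (1 - ρ) * (v p.1 * A p.1 p.2) else 0)]
    congr 1
    refine sum_congr rfl fun i _ => ?_
    rw [sum_mul, mul_sum]
    refine sum_congr rfl fun j _ => ?_
    split_ifs <;> ring
  unfold What
  simp_rw [hK]
  have hE := sum_bernoulliWeight_mul_add_sum (fun p : Firm L n × Firm L n => r p.1 p.2)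
    (fun p => Real.log (1 - ρ) * (v p.1 * A p.1 p.2)) (∑ i, v i * (b0 i.1 * Real.log (b0 i.1)))
  simp only [bernoulliWeight] at hE
  rw [hE]
  congr 1
  rw [Fintype.sum_prod_type, mul_sum]
  refine sum_congr rfl fun i _ => ?_
  rw [mul_sum, mul_sum]
  exact sum_congr rfl fun j _ => by ring

theorem exists_What_AQ_eq_add_mul_meanClusterDist (a0 b0 : Fin L → ℝ) (B : Fin L → Fin L → ℝ)
    (ha0 : ∀ ℓ, 0 ≤ a0 ℓ) (hb0 : ∀ ℓ, 0 < b0 ℓ) (hB : ∀ ℓ ℓ', 0 ≤ B ℓ ℓ')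
    (hrow : ∀ ℓ, b0 ℓ + ∑ ℓ', B ℓ ℓ' ≤ 1) {ρ : ℝ} (hρ : ρ ∈ Set.Icc (0 : ℝ) 1)
    {r0 : ℝ} (hr0 : 0 ≤ r0) {r : Firm L n → Firm L n → ℝ}
    (hr : ∀ i j : Firm L n, r i j = r0 * ((|(i.2.val : ℝ) - (j.2.val : ℝ)| + 1) / n)) :
    ∃ C κ : ℝ, κ ≤ 0 ∧ ∀ Q : Setoid (Fin n),
      What a0 b0 ρ r phiSum (AQ B Q) = C + κ * meanClusterDist Q := by
  set W := a0 ᵥ* (1 - of B)⁻¹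
  have hBrow : ∀ ℓ, ∑ ℓ', of B ℓ ℓ' < 1 := fun ℓ => by
    simp only [of_apply]; linarith [hrow ℓ, hb0 ℓ]
  have hW : W ᵥ* (1 - of B) = a0 := by
    rw [vecMul_vecMul, nonsing_inv_mul _ (det_one_sub_ne_zero (A := of B) hB hBrow).isUnit,
      vecMul_one]
  have hv : ∀ Q : Setoid (Fin n), a0n n a0 ᵥ* (1 - AQ B Q)⁻¹ = fun i => W i.1 / n :=
    fun Q => vecMul_inv_one_sub_AQ B Q (det_one_sub_ne_zero (AQ_nonneg Q hB)
      fun i => by rw [sum_AQ_apply]; linarith [hrow i.1, hb0 i.1]) hW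
  have hlog : Real.log (1 - ρ) ≤ 0 := Real.log_nonpos (by linarith [hρ.2]) (by linarith [hρ.1])
  have hWnonneg : ∀ ℓ, 0 ≤ W ℓ := vecMul_inv_one_sub_nonneg (A := of B) hB hBrow ha0
  refine ⟨∑ i : Firm L n, W i.1 / n * (b0 i.1 * Real.log (b0 i.1))
      + Real.log (1 - ρ) * (r0 / n * ∑ i : Firm L n, W i.1 / n * ∑ ℓ', B i.1 ℓ'),
    Real.log (1 - ρ) * (r0 / n * ∑ ℓ, W ℓ / n * ∑ ℓ' ∈ univ.erase ℓ, B ℓ ℓ'),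
    mul_nonpos_of_nonpos_of_nonneg hlog (mul_nonneg (by positivity) (sum_nonneg fun ℓ _ =>
      mul_nonneg (by positivity [hWnonneg ℓ]) (sum_nonneg fun ℓ' _ => hB ℓ ℓ'))),
    fun Q => ?_⟩
  rw [What_phiSum_eq _ _ _ _ (AQ_nonneg Q hB), hv Q]
  simp_rw [sum_mul_AQ_apply_of_dist B Q r0 hr, mul_add, sum_add_distrib]
  have hsplit : ∑ i : Firm L n, W i.1 / n * (r0 / n * ((∑ ℓ' ∈ univ.erase i.1, B i.1 ℓ')
        * clusterAvg Q (fun c' => |(i.2.val : ℝ) - c'.val|) i.2))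
      = r0 / n * (∑ ℓ, W ℓ / n * ∑ ℓ' ∈ univ.erase ℓ, B ℓ ℓ') * meanClusterDist Q := by
    rw [Fintype.sum_prod_type, meanClusterDist, mul_assoc, sum_mul_sum, mul_sum]
    refine sum_congr rfl fun ℓ _ => ?_
    rw [mul_sum]
    exact sum_congr rfl fun c _ => by ring
  have hdiag : ∑ i : Firm L n, W i.1 / n * (r0 / n * ∑ ℓ', B i.1 ℓ')
      = r0 / n * ∑ i : Firm L n, W i.1 / n * ∑ ℓ', B i.1 ℓ' := by
    rw [mul_sum]
    exact sum_congr rfl fun i _ => mul_left_comm _ _ _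
  rw [hsplit, hdiag]
  ring

end Welfare

theorem sum_disruption_distance_welfare_comparison_general
    (n L : ℕ)
    (a0 b0 : Fin L → ℝ) (B : Fin L → Fin L → ℝ)
    (ha0 : ∀ ℓ, 0 < a0 ℓ)
    (hb0 : ∀ ℓ, 0 < b0 ℓ) (hB : ∀ ℓ ℓ', 0 ≤ B ℓ ℓ')
    (hrow : ∀ ℓ, b0 ℓ + ∑ ℓ', B ℓ ℓ' ≤ 1)
    (ρ : ℝ) (hρ : ρ ∈ Set.Ico (0 : ℝ) 1)
    (r : Firm L n → Firm L n → ℝ)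
    (hr : ∃ r0 ∈ Set.Icc (0 : ℝ) 1, ∀ i j : Firm L n,
        r i j = r0 * ((|(i.2.val : ℝ) - (j.2.val : ℝ)| + 1) / n))
    (Q : Setoid (Fin n)) :
    What a0 b0 ρ r phiSum (AQ B Q)
        ≤ What a0 b0 ρ r phiSum (AQ B (⊥ : Setoid (Fin n)))
    ∧ What a0 b0 ρ r phiSum (AQ B (⊤ : Setoid (Fin n)))
        ≤ What a0 b0 ρ r phiSum (AQ B Q) := by
  obtain ⟨r0, hr0, hr⟩ := hr
  obtain ⟨C, κ, hκ, hWhat⟩ := exists_What_AQ_eq_add_mul_meanClusterDist a0 b0 B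
    (fun ℓ => (ha0 ℓ).le) hb0 hB hrow (Set.Ico_subset_Icc_self hρ) hr0.1 hr
  have hbot : meanClusterDist (⊥ : Setoid (Fin n)) ≤ meanClusterDist Q :=
    meanClusterDist_bot.trans_le (meanClusterDist_nonneg Q)
  rw [hWhat, hWhat, hWhat]
  exact ⟨add_le_add_right (mul_le_mul_of_nonpos_left hbot hκ) C,
    add_le_add_right (mul_le_mul_of_nonpos_left (meanClusterDist_le_top Q) hκ) C⟩

theorem sum_disruption_distance_welfare_comparison
    (n L : ℕ) (hn : 1 ≤ n) (hL : 1 ≤ L)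
    (a0 b0 : Fin L → ℝ) (B : Fin L → Fin L → ℝ)
    (ha0 : ∀ ℓ, 0 < a0 ℓ) (ha0sum : ∑ ℓ, a0 ℓ = 1)
    (hb0 : ∀ ℓ, 0 < b0 ℓ) (hB : ∀ ℓ ℓ', 0 ≤ B ℓ ℓ')
    (hrow : ∀ ℓ, b0 ℓ + ∑ ℓ', B ℓ ℓ' ≤ 1)
    (ρ : ℝ) (hρ : ρ ∈ Set.Ico (0 : ℝ) 1)
    (r : Firm L n → Firm L n → ℝ)
    (hr : ∃ r0 ∈ Set.Icc (0 : ℝ) 1, ∀ i j : Firm L n,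
        r i j = r0 * ((|(i.2.val : ℝ) - (j.2.val : ℝ)| + 1) / n))
    (Q : Setoid (Fin n)) :
    What a0 b0 ρ r phiSum (AQ B Q)
        ≤ What a0 b0 ρ r phiSum (AQ B (⊥ : Setoid (Fin n)))
    ∧ What a0 b0 ρ r phiSum (AQ B (⊤ : Setoid (Fin n)))
        ≤ What a0 b0 ρ r phiSum (AQ B Q) :=
  sum_disruption_distance_welfare_comparison_general n L a0 b0 B ha0 hb0 hB hrow ρ hρ r hr Q
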